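/- For any fixed input stream, any item x with n_x(t) > 0, and any time t with P(Z_x(t) = 1) < 1, the Unbiased Space Saving estimate is biased upward conditional on inclusion: E[N̂_x(t) | Z_x(t) = 1] = n_x(t) / P(Z_x(t) = 1) > n_x(t), where Z_x(t) is the indicator that x is a label in the sketch after t elements. -/

import Mathlib

open MeasureTheory ProbabilityTheory Filter

/-- The state of a Space Saving sketch with `m` bins: each bin holds an
optional label (`none` = no label yet) and a count. -/
abbrev SSState (m : ℕ) := Fin m → Option ℕ × ℕ

/-- Initial state: all bins unlabeled with count 0. -/
def initState (m : ℕ) : SSState m := fun _ => (none, 0)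

/-- The minimal bin count `N̂_min` (0 when `m = 0`). -/
noncomputable def minCount {m : ℕ} (s : SSState m) : ℕ := ⨅ j, (s j).2

/-- The maximal bin count `N̂_max` (0 when `m = 0`). -/
noncomputable def maxCount {m : ℕ} (s : SSState m) : ℕ := ⨆ j, (s j).2

/-- Select a bin of minimal count using the tie-breaking randomness `v`:
among the `k` bins of minimal count (sorted by index), the one of rank
`⌊v * k⌋` (clamped) is chosen; this is a uniformly random choice among the
tied bins when `v` is uniform on `[0,1)`.  Returns `none` iff `m = 0`. -/
noncomputable def pickMin {m : ℕ} (s : SSState m) (v : ℝ) : Option (Fin m) :=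
  let l := (Finset.univ.filter fun j => ∀ k, (s j).2 ≤ (s k).2).sort (· ≤ ·)
  l[min (⌊v * l.length⌋.toNat) (l.length - 1)]?

/-- One step of the (Unbiased) Space Saving update upon arrival of item `x`,
with label-replacement randomness `u` and tie-breaking randomness `v`.
If `x` is a label of the sketch, its bin's count is incremented; otherwise a
minimal bin (count `N̂_min`) is selected, its count is incremented, and its
label is replaced by `x` iff `u < 1/(N̂_min + 1)` (so a uniform `u` on `[0,1)`
replaces the label with probability `1/(N̂_min+1)`; taking `u = 0` makes the
replacement always happen, which is the Deterministic Space Saving update). -/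
noncomputable def ssUpdate {m : ℕ} (x : ℕ) (u v : ℝ) (s : SSState m) : SSState m :=
  if ∃ j, (s j).1 = some x then
    fun j => if (s j).1 = some x then (some x, (s j).2 + 1) else s j
  else
    match pickMin s v with
    | none => s
    | some j₀ =>
        Function.update s j₀
          ((if u < 1 / (((s j₀).2 : ℝ) + 1) then some x else (s j₀).1), (s j₀).2 + 1)

/-- The sketch state after `t` stream elements, where the `r`-th element
(0-indexed) is `x r`, with randomness sequences `u` (label replacement)
and `v` (tie breaking). -/
noncomputable def ssRun (m : ℕ) (x : ℕ → ℕ) (u v : ℕ → ℝ) : ℕ → SSState m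
  | 0 => initState m
  | t + 1 => ssUpdate (x t) (u t) (v t) (ssRun m x u v t)

/-- Estimated count `N̂_i` of item `i`: the count of the bin labeled `i`,
or `0` if no bin is labeled `i`. -/
def ssEst {m : ℕ} (s : SSState m) (i : ℕ) : ℕ :=
  ∑ j, if (s j).1 = some i then (s j).2 else 0

/-- `Z_i = 1`: item `i` is one of the labels of the sketch. -/
def isLabel {m : ℕ} (s : SSState m) (i : ℕ) : Prop := ∃ j, (s j).1 = some i

/-- True count `n_i(t)` of item `i` among the first `t` stream elements. -/
def trueCount (x : ℕ → ℕ) (i t : ℕ) : ℕ :=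
  ((Finset.range t).filter fun r => x r = i).card

/-- The uniform distribution on `[0,1)`. -/
noncomputable def unif01 : Measure ℝ := volume.restrict (Set.Ico (0:ℝ) 1)

/-- The law on `ℕ` of a discrete item distribution with probabilities `p`. -/
noncomputable def itemLaw (p : ℕ → ℝ) : Measure ℕ :=
  Measure.sum fun i => ENNReal.ofReal (p i) • Measure.dirac i

/-! Unbiasedness, `E[N̂_a(t)] = n_a(t)`, is proved by induction on `t`. The randomness of step `t`
is independent of the sketch state after `t` steps, so it suffices to average a single update over
uniform `(u, v)` for a fixed state. If `x` is already a label, exactly one bin is incremented (labels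
stay distinct). Otherwise a minimal bin of count `c` is incremented and relabelled with probability
`1 / (c + 1)`: its contribution to `N̂_a` gains `c + 1` with that probability when `x = a`, and is lost
with that probability when the bin was labelled `a`, so it changes by `[x = a]` on average.
Since `N̂_a` vanishes off the inclusion event, its integral over that event is `n_a(t) > 0`, which
forces `P(Z_a(t) = 1) > 0`; dividing by a probability `< 1` then gives the strict upward bias. -/

-- Sketch states are countable; with discrete labels they form a discrete measurable space.
instance {α : Type*} : MeasurableSpace (Option α) := ⊤

instance {α : Type*} : DiscreteMeasurableSpace (Option α) := ⟨fun _ => trivial⟩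

instance : IsProbabilityMeasure unif01 := ⟨by simp [unif01, Real.volume_Ico]⟩

lemma unif01_real_Iio {r : ℝ} (h0 : 0 ≤ r) (h1 : r ≤ 1) : unif01.real (Set.Iio r) = r := by
  rw [unif01, measureReal_restrict_apply measurableSet_Iio, Set.inter_comm, Set.Ico_inter_Iio,
    min_eq_right h1, Real.volume_real_Ico_of_le h0, sub_zero]

lemma integral_ite_lt_unif01 {r : ℝ} (h0 : 0 ≤ r) (h1 : r ≤ 1) (A B : ℝ) :
    ∫ u, (if u < r then A else B) ∂unif01 = r * A + (1 - r) * B := by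
  change ∫ u, (Set.Iio r).piecewise (fun _ => A) (fun _ => B) u ∂unif01 = _
  rw [integral_piecewise measurableSet_Iio integrableOn_const integrableOn_const,
    setIntegral_const, setIntegral_const, probReal_compl_eq_one_sub measurableSet_Iio,
    unif01_real_Iio h0 h1, smul_eq_mul, smul_eq_mul]

lemma lt_div_toReal_of_integral_eq {Ω : Type*} [MeasurableSpace Ω] {P : Measure Ω}
    [IsProbabilityMeasure P] {A : Set Ω} {f : Ω → ℝ} {c : ℝ} (hf : ∀ ω ∉ A, f ω = 0)
    (hint : ∫ ω, f ω ∂P = c) (hc : 0 < c) (hA : P A < 1) : c < c / (P A).toReal := by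
  have hA0 : P A ≠ 0 := fun h => by
    have h0 : ∫ ω in A, f ω ∂P = 0 := by rw [Measure.restrict_eq_zero.2 h, integral_zero_measure]
    rw [setIntegral_eq_integral_of_forall_compl_eq_zero hf, hint] at h0
    exact hc.ne' h0
  have hlt : (P A).toReal < 1 := by
    simpa using (ENNReal.toReal_lt_toReal (measure_ne_top P A) ENNReal.one_ne_top).2 hA
  rw [lt_div_iff₀ (ENNReal.toReal_pos hA0 (measure_ne_top P A))]
  exact mul_lt_of_lt_one_right hc hlt

lemma trueCount_succ (x : ℕ → ℕ) (a t : ℕ) :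
    trueCount x a (t + 1) = trueCount x a t + if x t = a then 1 else 0 := by
  simp only [trueCount, Finset.card_filter, Finset.sum_range_succ]

section SpaceSaving

variable {m : ℕ}

def LabelsDistinct (s : SSState m) : Prop :=
  ∀ j k y, (s j).1 = some y → (s k).1 = some y → j = k

lemma ssEst_update (s : SSState m) (j : Fin m) (b : Option ℕ × ℕ) (a : ℕ) :
    ssEst (Function.update s j b) a + (if (s j).1 = some a then (s j).2 else 0)
      = ssEst s a + (if b.1 = some a then b.2 else 0) := by
  let f : Option ℕ × ℕ → ℕ := fun b => if b.1 = some a then b.2 else 0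
  change ∑ k, f (Function.update s j b k) + f (s j) = ∑ k, f (s k) + f b
  simp only [Function.apply_update (fun _ => f), Finset.sum_update_of_mem (Finset.mem_univ j),
    ← Finset.add_sum_erase _ _ (Finset.mem_univ j), Finset.sdiff_singleton_eq_erase]
  ring

lemma ssEst_eq_zero_of_not_isLabel {s : SSState m} {a : ℕ} (h : ¬ isLabel s a) :
    ssEst s a = 0 :=
  Finset.sum_eq_zero fun j _ => if_neg fun hj => h ⟨j, hj⟩

lemma ssEst_le_sum_count (s : SSState m) (a : ℕ) : ssEst s a ≤ ∑ j, (s j).2 :=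
  Finset.sum_le_sum fun j _ => by split_ifs <;> simp

lemma exists_pickMin_eq_some (hm : 0 < m) (s : SSState m) (v : ℝ) :
    ∃ j, pickMin s v = some j := by
  obtain ⟨j, -, hj⟩ := Finset.exists_min_image Finset.univ (fun j : Fin m => (s j).2)
    ⟨⟨0, hm⟩, Finset.mem_univ _⟩
  set l := (Finset.univ.filter fun j : Fin m => ∀ k, (s j).2 ≤ (s k).2).sort (· ≤ ·)
  have hjl : j ∈ l := by simpa [l] using fun k => hj k (Finset.mem_univ k)
  have hl : 0 < l.length := List.length_pos_of_mem hjl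
  have hidx : min (⌊v * l.length⌋.toNat) (l.length - 1) < l.length :=
    (min_le_right _ _).trans_lt (Nat.sub_lt hl one_pos)
  exact ⟨l[_], List.getElem?_eq_getElem hidx⟩

lemma ssUpdate_of_label {s : SSState m} (hs : LabelsDistinct s) {x : ℕ} {j : Fin m}
    (hj : (s j).1 = some x) (u v : ℝ) :
    ssUpdate x u v s = Function.update s j (some x, (s j).2 + 1) := by
  rw [ssUpdate, if_pos ⟨j, hj⟩]
  funext k
  by_cases hk : k = j
  · subst hk; simp [hj]
  · have hkx : (s k).1 ≠ some x := fun h => hk (hs k j x h hj)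
    simp [Function.update_of_ne hk, hkx]

lemma ssUpdate_of_not_label {s : SSState m} {x : ℕ} (h : ¬ isLabel s x) {v : ℝ} {j : Fin m}
    (hj : pickMin s v = some j) (u : ℝ) :
    ssUpdate x u v s = if u < 1 / (((s j).2 : ℝ) + 1)
      then Function.update s j (some x, (s j).2 + 1)
      else Function.update s j ((s j).1, (s j).2 + 1) := by
  rw [ssUpdate, if_neg (show ¬ ∃ j, (s j).1 = some x from h), hj]
  split_ifs with hu <;> simp only [hu, ↓reduceIte]

lemma LabelsDistinct.update {s : SSState m} (hs : LabelsDistinct s) {j : Fin m}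
    {b : Option ℕ × ℕ} (hb : ∀ y, b.1 = some y → ∀ k ≠ j, (s k).1 ≠ some y) :
    LabelsDistinct (Function.update s j b) := by
  intro k l y hk hl
  rcases eq_or_ne k j with rfl | hkj <;> rcases eq_or_ne l k with rfl | hlk
  · rfl
  · rw [Function.update_self] at hk
    rw [Function.update_of_ne hlk] at hl
    exact absurd hl (hb y hk l hlk)
  · rfl
  · rw [Function.update_of_ne hkj] at hk
    rcases eq_or_ne l j with rfl | hlj
    · rw [Function.update_self] at hl
      exact absurd hk (hb y hl k hkj)
    · rw [Function.update_of_ne hlj] at hl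
      exact hs k l y hk hl

lemma LabelsDistinct.ssUpdate {s : SSState m} (hs : LabelsDistinct s) (x : ℕ) (u v : ℝ) :
    LabelsDistinct (ssUpdate x u v s) := by
  by_cases h : isLabel s x
  · obtain ⟨j, hj⟩ := h
    rw [ssUpdate_of_label hs hj]
    exact hs.update fun y hy k hk hky => hk (hs k j y hky (hj.trans hy))
  rcases hp : pickMin s v with _ | j
  · have h' : ¬ ∃ j, (s j).1 = some x := h
    simpa [_root_.ssUpdate, h', hp] using hs
  rw [ssUpdate_of_not_label h hp]
  split_ifs
  · exact hs.update fun y hy k _ hky => h ⟨k, hky.trans hy.symm⟩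
  · exact hs.update fun y hy k hk hky => hk (hs k j y hky hy)

lemma labelsDistinct_ssRun (x : ℕ → ℕ) (u v : ℕ → ℝ) (t : ℕ) :
    LabelsDistinct (ssRun m x u v t) := by
  induction t with
  | zero => intro j k y hj; simp [ssRun, initState] at hj
  | succ t ih => exact ih.ssUpdate _ _ _

lemma count_ssUpdate_le (x : ℕ) (u v : ℝ) (s : SSState m) (j : Fin m) :
    (ssUpdate x u v s j).2 ≤ (s j).2 + 1 := by
  unfold ssUpdate
  split_ifs
  · dsimp only; split_ifs <;> simp
  · rcases pickMin s v with _ | j₀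
    · simp
    · dsimp only; rw [Function.update_apply]; split_ifs with h <;> simp [h]

lemma count_ssRun_le (x : ℕ → ℕ) (u v : ℕ → ℝ) (t : ℕ) (j : Fin m) :
    (ssRun m x u v t j).2 ≤ t := by
  induction t with
  | zero => simp [ssRun, initState]
  | succ t ih => exact (count_ssUpdate_le _ _ _ _ j).trans (by omega)

lemma ssEst_ssUpdate_le (x : ℕ) (u v : ℝ) (s : SSState m) (a : ℕ) :
    ssEst (ssUpdate x u v s) a ≤ ∑ j, ((s j).2 + 1) :=
  (ssEst_le_sum_count _ a).trans (Finset.sum_le_sum fun j _ => count_ssUpdate_le x u v s j)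

lemma ssEst_ssRun_le (x : ℕ → ℕ) (u v : ℕ → ℝ) (t a : ℕ) :
    ssEst (ssRun m x u v t) a ≤ m * t :=
  calc ssEst (ssRun m x u v t) a ≤ ∑ j, (ssRun m x u v t j).2 := ssEst_le_sum_count _ a
    _ ≤ ∑ _j : Fin m, t := Finset.sum_le_sum fun j _ => count_ssRun_le x u v t j
    _ = m * t := by simp

lemma ssRun_congr (x : ℕ → ℕ) {u v u' v' : ℕ → ℝ} {t : ℕ}
    (hu : ∀ r < t, u r = u' r) (hv : ∀ r < t, v r = v' r) :
    ssRun m x u v t = ssRun m x u' v' t := by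
  induction t with
  | zero => rfl
  | succ t ih =>
    simp only [ssRun, hu t t.lt_succ_self, hv t t.lt_succ_self,
      ih (fun r hr => hu r (hr.trans t.lt_succ_self)) (fun r hr => hv r (hr.trans t.lt_succ_self))]

lemma measurable_pickMin (s : SSState m) : Measurable (pickMin s) := by
  let l := (Finset.univ.filter fun j : Fin m => ∀ k, (s j).2 ≤ (s k).2).sort (· ≤ ·)
  change Measurable ((fun n : ℤ => l[min n.toNat (l.length - 1)]?) ∘ fun v : ℝ => ⌊v * l.length⌋)
  exact (measurable_of_countable _).comp (measurable_id.mul_const _).floor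

lemma measurable_ssUpdate (x : ℕ) (s : SSState m) :
    Measurable fun p : ℝ × ℝ => ssUpdate x p.1 p.2 s := by
  by_cases h : ∃ j, (s j).1 = some x
  · simp only [ssUpdate, if_pos h]; exact measurable_const
  simp only [ssUpdate, if_neg h]
  let F : ℝ × Option (Fin m) → SSState m := fun q => match q.2 with
    | none => s
    | some j => Function.update s j
        ((if q.1 < 1 / (((s j).2 : ℝ) + 1) then some x else (s j).1), (s j).2 + 1)
  change Measurable (F ∘ fun p : ℝ × ℝ => (p.1, pickMin s p.2))
  refine (measurable_from_prod_countable_left fun o => ?_).comp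
    (measurable_fst.prodMk ((measurable_pickMin s).comp measurable_snd))
  rcases o with _ | j
  · exact measurable_const
  · have hF : (fun u => F (u, some j)) = fun u => if u < 1 / (((s j).2 : ℝ) + 1)
        then Function.update s j (some x, (s j).2 + 1)
        else Function.update s j ((s j).1, (s j).2 + 1) := by
      funext u; split_ifs with hu <;> simp only [F, hu, ↓reduceIte]
    rw [hF]
    exact Measurable.ite measurableSet_Iio measurable_const measurable_const

lemma measurable_ssUpdate_uncurry (x : ℕ) :
    Measurable fun q : (ℝ × ℝ) × SSState m => ssUpdate x q.1.1 q.1.2 q.2 :=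
  measurable_from_prod_countable_left fun s => measurable_ssUpdate x s

lemma measurable_ssRun {β : Type*} [MeasurableSpace β] (U V : ℕ → β → ℝ)
    (hUV : ∀ r, Measurable fun b => (U r b, V r b)) (x : ℕ → ℕ) (t : ℕ) :
    Measurable fun b => ssRun m x (fun r => U r b) (fun r => V r b) t := by
  induction t with
  | zero => exact measurable_const
  | succ t ih => exact (measurable_ssUpdate_uncurry (x t)).comp ((hUV t).prodMk ih)

lemma integral_ssEst_ssUpdate_unif01 (hm : 0 < m) {s : SSState m} (hs : LabelsDistinct s)
    (x a : ℕ) (v : ℝ) :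
    ∫ u, (ssEst (ssUpdate x u v s) a : ℝ) ∂unif01 = ssEst s a + if x = a then 1 else 0 := by
  by_cases h : isLabel s x
  · obtain ⟨j, hj⟩ := h
    have hupd := ssEst_update s j (some x, (s j).2 + 1) a
    have hest : ssEst (Function.update s j (some x, (s j).2 + 1)) a
        = ssEst s a + if x = a then 1 else 0 := by
      simp only [hj, Option.some.injEq] at hupd
      split_ifs at hupd ⊢ <;> omega
    simp [ssUpdate_of_label hs hj, hest]
  · obtain ⟨j, hp⟩ := exists_pickMin_eq_some hm s v
    have hc : (0 : ℝ) < (s j).2 + 1 := by positivity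
    have hlabel := ssEst_update s j (some x, (s j).2 + 1) a
    have hkeep := ssEst_update s j ((s j).1, (s j).2 + 1) a
    simp only [ssUpdate_of_not_label h hp, apply_ite (fun s' => (ssEst s' a : ℝ))]
    rw [integral_ite_lt_unif01 (by positivity) ((div_le_one hc).2 (by linarith))]
    simp only [Option.some.injEq] at hlabel hkeep
    have h1 := congrArg (Nat.cast : ℕ → ℝ) hlabel
    have h0 := congrArg (Nat.cast : ℕ → ℝ) hkeep
    push_cast at h1 h0
    field_simp
    split_ifs at h1 h0 ⊢ <;> linear_combination h1 + ((s j).2 : ℝ) * h0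

lemma integral_ssEst_ssUpdate (hm : 0 < m) {s : SSState m} (hs : LabelsDistinct s) (x a : ℕ) :
    ∫ p : ℝ × ℝ, (ssEst (ssUpdate x p.1 p.2 s) a : ℝ) ∂(unif01.prod unif01)
      = ssEst s a + if x = a then 1 else 0 := by
  have hint : Integrable (fun p : ℝ × ℝ => (ssEst (ssUpdate x p.1 p.2 s) a : ℝ))
      (unif01.prod unif01) :=
    Integrable.of_bound ((measurable_of_countable fun s' : SSState m => (ssEst s' a : ℝ)).comp
      (measurable_ssUpdate x s)).aestronglyMeasurable (∑ j, ((s j).2 + 1) : ℕ)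
      (ae_of_all _ fun p => by
        rw [Real.norm_natCast]; exact_mod_cast ssEst_ssUpdate_le x p.1 p.2 s a)
  rw [integral_prod_symm _ hint]
  simp [integral_ssEst_ssUpdate_unif01 hm hs]

variable {Ω : Type*} [MeasurableSpace Ω] {P : Measure Ω} {U V : ℕ → Ω → ℝ}

lemma indepFun_ssRun (hmeas : ∀ t, Measurable fun ω => (U t ω, V t ω))
    (hindep : iIndepFun (fun t ω => (U t ω, V t ω)) P) (x : ℕ → ℕ) (t : ℕ) :
    IndepFun (fun ω => (U t ω, V t ω))
      (fun ω => ssRun m x (fun r => U r ω) (fun r => V r ω) t) P := by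
  let extend : (Finset.range t → ℝ × ℝ) → ℕ → ℝ × ℝ :=
    fun f r => if hr : r ∈ Finset.range t then f ⟨r, hr⟩ else 0
  have hextend : ∀ r, Measurable fun f => extend f r := fun r => by
    by_cases hr : r ∈ Finset.range t
    · simp only [extend, dif_pos hr]; exact measurable_pi_apply _
    · simp only [extend, dif_neg hr]; exact measurable_const
  have hrun := measurable_ssRun (m := m) (fun r f => (extend f r).1) (fun r f => (extend f r).2)
    hextend x t
  convert (hindep.indepFun_finset {t} (Finset.range t) (by simp) hmeas).comp
    (measurable_pi_apply ⟨t, Finset.mem_singleton_self t⟩) hrun using 1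
  · rfl
  funext ω
  exact ssRun_congr x (fun r hr => by simp only [extend, dif_pos (Finset.mem_range.2 hr)])
    (fun r hr => by simp only [extend, dif_pos (Finset.mem_range.2 hr)])

variable [IsProbabilityMeasure P]

lemma integrable_ssEst_ssRun (hmeas : ∀ t, Measurable fun ω => (U t ω, V t ω))
    (x : ℕ → ℕ) (a t : ℕ) :
    Integrable (fun ω => (ssEst (ssRun m x (fun r => U r ω) (fun r => V r ω) t) a : ℝ)) P :=
  Integrable.of_bound ((measurable_of_countable fun s : SSState m => (ssEst s a : ℝ)).comp
    (measurable_ssRun U V hmeas x t)).aestronglyMeasurable (m * t : ℕ)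
    (ae_of_all _ fun ω => by rw [Real.norm_natCast]; exact_mod_cast ssEst_ssRun_le x _ _ t a)

theorem integral_ssEst_ssRun (hm : 0 < m) (hmeas : ∀ t, Measurable fun ω => (U t ω, V t ω))
    (hindep : iIndepFun (fun t ω => (U t ω, V t ω)) P)
    (hlaw : ∀ t, Measure.map (fun ω => (U t ω, V t ω)) P = unif01.prod unif01)
    (x : ℕ → ℕ) (a t : ℕ) :
    ∫ ω, (ssEst (ssRun m x (fun r => U r ω) (fun r => V r ω) t) a : ℝ) ∂P = trueCount x a t := by
  induction t with
  | zero => simp [ssRun, initState, ssEst, trueCount]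
  | succ t ih =>
    set S := fun ω => ssRun m x (fun r => U r ω) (fun r => V r ω) t
    have hS : Measurable S := measurable_ssRun U V hmeas x t
    have hWS : Measurable fun ω => ((U t ω, V t ω), S ω) := (hmeas t).prodMk hS
    let g : (ℝ × ℝ) × SSState m → ℝ := fun q => ssEst (ssUpdate (x t) q.1.1 q.1.2 q.2) a
    have hg : Measurable g := (measurable_of_countable fun s : SSState m => (ssEst s a : ℝ)).comp
      (measurable_ssUpdate_uncurry (x t))
    have hmap : P.map (fun ω => ((U t ω, V t ω), S ω)) = (unif01.prod unif01).prod (P.map S) := by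
      rw [← hlaw t]
      exact (indepFun_iff_map_prod_eq_prod_map_map (hmeas t).aemeasurable hS.aemeasurable).1
        (indepFun_ssRun hmeas hindep x t)
    have hgint : Integrable g ((unif01.prod unif01).prod (P.map S)) := by
      rw [← hmap, integrable_map_measure hg.aestronglyMeasurable hWS.aemeasurable]
      exact integrable_ssEst_ssRun hmeas x a (t + 1)
    have hdistinct : ∀ᵐ s ∂(P.map S), LabelsDistinct s :=
      (ae_map_iff hS.aemeasurable MeasurableSet.of_discrete).2
        (ae_of_all _ fun ω => labelsDistinct_ssRun x _ _ t)
    calc ∫ ω, (ssEst (ssRun m x (fun r => U r ω) (fun r => V r ω) (t + 1)) a : ℝ) ∂P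
        = ∫ q, g q ∂((unif01.prod unif01).prod (P.map S)) := by
          rw [← hmap, integral_map hWS.aemeasurable hg.aestronglyMeasurable]; rfl
      _ = ∫ s, ∫ w, g (w, s) ∂(unif01.prod unif01) ∂(P.map S) := integral_prod_symm g hgint
      _ = ∫ s, ((ssEst s a : ℝ) + if x t = a then 1 else 0) ∂(P.map S) :=
          integral_congr_ae (hdistinct.mono fun s hs => integral_ssEst_ssUpdate hm hs (x t) a)
      _ = ∫ ω, (ssEst (S ω) a : ℝ) ∂P + if x t = a then 1 else 0 := by
          rw [integral_map hS.aemeasurable (measurable_of_countable _).aestronglyMeasurable,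
            integral_add (integrable_ssEst_ssRun hmeas x a t) (integrable_const _)]
          simp [S]
      _ = trueCount x a (t + 1) := by
          rw [ih, trueCount_succ]; push_cast; rfl

end SpaceSaving

/-- For a fixed input stream `x`, an item `a` with
`n_a(t) > 0` and a time `t` with `P(Z_a(t) = 1) < 1`, the Unbiased Space
Saving estimate is biased upward conditional on inclusion:
`E[N̂_a(t) | Z_a(t) = 1] = n_a(t) / P(Z_a(t) = 1) > n_a(t)`. -/
theorem unbiased_space_saving_upward_bias_on_inclusion
    {Ω : Type*} [MeasurableSpace Ω] (P : Measure Ω) [IsProbabilityMeasure P]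
    (m : ℕ) (hm : 0 < m)
    (U V : ℕ → Ω → ℝ)
    (hmeas : ∀ t, Measurable fun ω => (U t ω, V t ω))
    (hindep : iIndepFun (fun t ω => (U t ω, V t ω)) P)
    (hlaw : ∀ t, Measure.map (fun ω => (U t ω, V t ω)) P = unif01.prod unif01)
    (x : ℕ → ℕ) (a : ℕ) (t : ℕ)
    (hpos : 0 < trueCount x a t)
    (hincl : P {ω | isLabel (ssRun m x (fun r => U r ω) (fun r => V r ω) t) a} < 1) :
    (∫ ω in {ω | isLabel (ssRun m x (fun r => U r ω) (fun r => V r ω) t) a},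
          (ssEst (ssRun m x (fun r => U r ω) (fun r => V r ω) t) a : ℝ) ∂P)
        / (P {ω | isLabel (ssRun m x (fun r => U r ω) (fun r => V r ω) t) a}).toReal
      = (trueCount x a t : ℝ)
        / (P {ω | isLabel (ssRun m x (fun r => U r ω) (fun r => V r ω) t) a}).toReal
    ∧ (trueCount x a t : ℝ)
      < (trueCount x a t : ℝ)
        / (P {ω | isLabel (ssRun m x (fun r => U r ω) (fun r => V r ω) t) a}).toReal := by
  have hvanish : ∀ ω ∉ {ω | isLabel (ssRun m x (fun r => U r ω) (fun r => V r ω) t) a},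
      (ssEst (ssRun m x (fun r => U r ω) (fun r => V r ω) t) a : ℝ) = 0 :=
    fun ω hω => by exact_mod_cast ssEst_eq_zero_of_not_isLabel hω
  have hmean := integral_ssEst_ssRun hm hmeas hindep hlaw x a t
  refine ⟨by rw [setIntegral_eq_integral_of_forall_compl_eq_zero hvanish, hmean], ?_⟩
  exact lt_div_toReal_of_integral_eq hvanish hmean (by exact_mod_cast hpos) hincl
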